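/- (Lyndon–Schützenberger) If u, v, w are words over an alphabet Σ with u^m v^n = w^k ≠ ε for natural numbers m, n, k ≥ 2, then u, v and w are powers of a common word, i.e., there exists a word t with u ∈ t*, v ∈ t*, and w ∈ t*. -/

import Mathlib

/-- `wpow v n` is the word `vⁿ`, the `n`-fold concatenation of the word `v` with itself. -/
def wpow {α : Type*} (v : List α) : ℕ → List α
  | 0 => []
  | n + 1 => v ++ wpow v n

/-- A nonempty word `u` is primitive if `u = vⁿ` implies `n = 1`. -/
def Primitive {α : Type*} (u : List α) : Prop :=
  u ≠ [] ∧ ∀ (v : List α) (n : ℕ), u = wpow v n → n = 1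

/-!
Write the equation as `uᵐ vⁿ = zᵏ` and induct on `|z|`. Reversing all words swaps the roles of
`u` and `v`, so assume `|vⁿ| ≤ |uᵐ|`. If `|u| + |z| ≤ |uᵐ|`, the word `uᵐ` has the periods `|u|`
and `|z|`, so by Fine–Wilf `u` and `z` are powers of one word, and then so is `vⁿ`; the symmetric
argument handles `|v| + |z| ≤ |vⁿ|`. Otherwise `k ∈ {2, 3}` and `uᵐ = z p` with `|p| < |u|`,
whence `u = q p` and `p z = (p q)ᵐ`. For `k = 2` this reads `p² vⁿ = (p q)ᵐ`, an equation of the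
same shape with the shorter word `p q` on the right. For `k = 3` one gets `z = p s`, `uᵐ = p s p`
and `vⁿ = s p s`, which forces `p s = s p`; so `z` is a proper power of a shorter word, and the
induction hypothesis applies again.
-/

namespace List

variable {α : Type*}

theorem exists_eq_append_of_append_eq_append {ws xs ys zs : List α}
    (h : ws ++ xs = ys ++ zs) (hle : ys.length ≤ ws.length) :
    ∃ as, ws = ys ++ as ∧ zs = as ++ xs := by
  rcases append_eq_append_iff.mp h with ⟨as, rfl, rfl⟩ | h'
  · obtain rfl : as = [] := by simpa using hle
    exact ⟨[], by simp, rfl⟩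
  · exact h'

end List

section Wpow

open List

variable {α : Type*}

@[simp] theorem wpow_zero (v : List α) : wpow v 0 = [] := rfl

theorem wpow_succ (v : List α) (n : ℕ) : wpow v (n + 1) = v ++ wpow v n := rfl

@[simp] theorem wpow_one (v : List α) : wpow v 1 = v := append_nil v

@[simp] theorem length_wpow (v : List α) (n : ℕ) : (wpow v n).length = n * v.length := by
  induction n with
  | zero => simp
  | succ n ih => rw [wpow_succ, length_append, ih, Nat.succ_mul, Nat.add_comm]

@[simp] theorem wpow_nil (n : ℕ) : wpow ([] : List α) n = [] := by
  induction n with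
  | zero => rfl
  | succ n ih => rw [wpow_succ, ih, nil_append]

theorem wpow_add (v : List α) (a b : ℕ) : wpow v (a + b) = wpow v a ++ wpow v b := by
  induction a with
  | zero => simp
  | succ a ih => rw [Nat.succ_add, wpow_succ, wpow_succ, ih, append_assoc]

theorem wpow_mul (v : List α) (a b : ℕ) : wpow v (a * b) = wpow (wpow v a) b := by
  induction b with
  | zero => rfl
  | succ b ih => rw [Nat.mul_succ, Nat.add_comm, wpow_add, ih, wpow_succ]

theorem wpow_succ' (v : List α) (n : ℕ) : wpow v (n + 1) = wpow v n ++ v := by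
  rw [wpow_add, wpow_one]

theorem wpow_eq_nil_iff {v : List α} {n : ℕ} : wpow v n = [] ↔ n = 0 ∨ v = [] := by
  rw [← length_eq_zero_iff, length_wpow, Nat.mul_eq_zero, length_eq_zero_iff]

theorem reverse_wpow (v : List α) (n : ℕ) : (wpow v n).reverse = wpow v.reverse n := by
  induction n with
  | zero => rfl
  | succ n ih => rw [wpow_succ, reverse_append, ih, ← wpow_succ']

theorem take_length_wpow {v : List α} {n : ℕ} (hn : n ≠ 0) :
    (wpow v n).take v.length = v := by
  obtain ⟨n, rfl⟩ := Nat.exists_eq_succ_of_ne_zero hn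
  exact take_left

theorem append_wpow_append (s t : List α) (n : ℕ) :
    t ++ wpow (s ++ t) n = wpow (t ++ s) n ++ t := by
  induction n with
  | zero => simp
  | succ n ih => simp only [wpow_succ, append_assoc, ih]

/-- The language `t*`. -/
def wpowers (t : List α) : Set (List α) := {x | ∃ i, x = wpow t i}

theorem self_mem_wpowers (t : List α) : t ∈ wpowers t := ⟨1, (wpow_one t).symm⟩

theorem nil_mem_wpowers (t : List α) : [] ∈ wpowers t := ⟨0, rfl⟩

theorem append_mem_wpowers {t x y : List α} (hx : x ∈ wpowers t) (hy : y ∈ wpowers t) :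
    x ++ y ∈ wpowers t := by
  obtain ⟨i, rfl⟩ := hx
  obtain ⟨j, rfl⟩ := hy
  exact ⟨i + j, (wpow_add t i j).symm⟩

theorem wpow_mem_wpowers_of_mem {t x : List α} (hx : x ∈ wpowers t) (n : ℕ) :
    wpow x n ∈ wpowers t := by
  obtain ⟨i, rfl⟩ := hx
  exact ⟨i * n, (wpow_mul t i n).symm⟩

theorem wpowers_trans {r t x : List α} (hx : x ∈ wpowers t) (ht : t ∈ wpowers r) :
    x ∈ wpowers r := by
  obtain ⟨i, rfl⟩ := hx
  exact wpow_mem_wpowers_of_mem ht i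

theorem reverse_mem_wpowers {t x : List α} (hx : x ∈ wpowers t) :
    x.reverse ∈ wpowers t.reverse := by
  obtain ⟨i, rfl⟩ := hx
  exact ⟨i, reverse_wpow t i⟩

theorem mem_wpowers_of_append_mem {t x y : List α} (hx : x ∈ wpowers t)
    (hxy : x ++ y ∈ wpowers t) : y ∈ wpowers t := by
  obtain ⟨i, rfl⟩ := hx
  obtain ⟨j, hj⟩ := hxy
  rcases eq_or_ne t [] with rfl | ht
  · simp only [wpow_nil, nil_append] at hj
    exact hj ▸ nil_mem_wpowers []
  have hij : i ≤ j := by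
    have := congrArg length hj
    simp only [length_append, length_wpow] at this
    exact Nat.le_of_mul_le_mul_right (by omega) (length_pos_iff.mpr ht)
  rw [← Nat.add_sub_cancel' hij, wpow_add] at hj
  exact ⟨j - i, append_cancel_left hj⟩

theorem length_le_of_mem_wpowers {t x : List α} (hx : x ∈ wpowers t) (hx0 : x ≠ []) :
    t.length ≤ x.length := by
  obtain ⟨i, rfl⟩ := hx
  have : i ≠ 0 := by rintro rfl; exact hx0 rfl
  rw [length_wpow]
  exact Nat.le_mul_of_pos_left _ (Nat.pos_of_ne_zero this)

theorem hasPeriod_wpow (v : List α) (n : ℕ) : (wpow v n).HasPeriod v.length := by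
  cases n with
  | zero => exact nil_prefix
  | succ n =>
    rw [HasPeriod, take_length_wpow n.succ_ne_zero, ← wpow_succ, wpow_succ' v (n + 1)]
    exact prefix_append _ _

end Wpow

namespace List.HasPeriod

variable {α : Type*}

theorem of_dvd {w : List α} {d e : ℕ} (hd : w.HasPeriod d) (hde : d ∣ e) : w.HasPeriod e := by
  rw [hasPeriod_iff_forall_getElem?_mod] at hd ⊢
  intro i hi
  rw [hd i hi, hd (i % e) (lt_of_le_of_lt (Nat.mod_le i e) hi), Nat.mod_mod_of_dvd i hde]

theorem take_mul_eq_wpow {w : List α} {d : ℕ} (hd : w.HasPeriod d) :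
    ∀ k, k * d ≤ w.length → w.take (k * d) = wpow (w.take d) k
  | 0, _ => by simp
  | k + 1, hk => by
    rw [Nat.succ_mul] at hk
    have hdrop : (w.drop d).take (k * d) = w.take (k * d) := by
      rw [prefix_iff_eq_take.mp hd.drop_prefix, take_take, length_drop]
      congr 1
      omega
    rw [Nat.succ_mul, Nat.add_comm, take_add, hdrop, hd.take_mul_eq_wpow k (by omega), wpow_succ]

end List.HasPeriod

section CommonRoot

open List

variable {α : Type*}

theorem exists_common_root_of_hasPeriod {w : List α} {p q : ℕ} (hp : w.HasPeriod p)
    (hq : w.HasPeriod q) (hlen : p + q ≤ w.length) :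
    ∃ t, w.take p ∈ wpowers t ∧ w.take q ∈ wpowers t := by
  have hg := hp.gcd hq (by omega)
  have hmem : ∀ r, p.gcd q ∣ r → r ≤ w.length → w.take r ∈ wpowers (w.take (p.gcd q)) := by
    intro r hr hrw
    rw [← Nat.div_mul_cancel hr] at hrw ⊢
    exact ⟨_, hg.take_mul_eq_wpow _ hrw⟩
  exact ⟨_, hmem p (Nat.gcd_dvd_left p q) (by omega), hmem q (Nat.gcd_dvd_right p q) (by omega)⟩

theorem exists_common_root_of_append_comm {x y : List α} (h : x ++ y = y ++ x) :
    ∃ t, x ∈ wpowers t ∧ y ∈ wpowers t := by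
  have hx : (x ++ y).HasPeriod x.length := by
    rw [HasPeriod, take_left, prefix_append_right_inj, h]
    exact prefix_append _ _
  have hy : (x ++ y).HasPeriod y.length := by
    rw [h, HasPeriod, take_left, prefix_append_right_inj, ← h]
    exact prefix_append _ _
  obtain ⟨t, htx, hty⟩ := exists_common_root_of_hasPeriod hx hy (by rw [length_append])
  rw [take_left] at htx
  rw [h, take_left] at hty
  exact ⟨t, htx, hty⟩

theorem exists_common_root_of_wpow_eq_wpow {x y : List α} {a b : ℕ} (h : wpow x a = wpow y b)
    (ha : 2 ≤ a) : ∃ t, x ∈ wpowers t ∧ y ∈ wpowers t := by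
  rcases Nat.lt_or_ge b 2 with hb | hb
  · interval_cases b
    · have hx : x = [] := by simpa [wpow_eq_nil_iff, show a ≠ 0 by omega] using h
      exact ⟨y, hx ▸ nil_mem_wpowers y, self_mem_wpowers y⟩
    · exact ⟨x, self_mem_wpowers x, ⟨a, by simpa using h.symm⟩⟩
  have hlen := congrArg length h
  simp only [length_wpow] at hlen
  obtain ⟨t, htx, hty⟩ := exists_common_root_of_hasPeriod (hasPeriod_wpow x a)
    (h ▸ hasPeriod_wpow y b : (wpow x a).HasPeriod y.length) (by rw [length_wpow]; nlinarith)
  rw [take_length_wpow (by omega)] at htx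
  rw [h, take_length_wpow (by omega)] at hty
  exact ⟨t, htx, hty⟩

theorem exists_eq_append_eq_append_of_append_append_eq {p s u : List α}
    (h : p ++ s ++ p = u ++ u) (hpu : p.length ≤ u.length) :
    ∃ s₁ s₂, s = s₁ ++ s₂ ∧ u = p ++ s₁ ∧ u = s₂ ++ p := by
  rw [append_assoc] at h
  obtain ⟨s₁, hu₁, hsp⟩ := exists_eq_append_of_append_eq_append h.symm hpu
  obtain ⟨s₂, hs, hu₂⟩ := exists_eq_append_of_append_eq_append hsp (by
    have := congrArg length hsp; have := congrArg length hu₁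
    simp only [length_append] at *; omega)
  exact ⟨s₁, s₂, hs, hu₁, hu₂⟩

theorem append_comm_of_wpow_eq_of_length_le {p s u v : List α} {m n : ℕ}
    (hu : p ++ s ++ p = wpow u m) (hv : s ++ p ++ s = wpow v n) (hm : 2 ≤ m) (hn : 2 ≤ n)
    (hpu : p.length < u.length) (hsv : s.length < v.length) (hsp : s.length ≤ p.length) :
    p ++ s = s ++ p := by
  have hul := congrArg length hu
  have hvl := congrArg length hv
  simp only [length_append, length_wpow] at hul hvl
  obtain rfl : m = 2 := by
    by_contra
    have : 3 * u.length ≤ m * u.length := Nat.mul_le_mul_right _ (by omega)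
    omega
  have hv2 : 2 * v.length ≤ n * v.length := Nat.mul_le_mul_right _ hn
  rw [wpow_succ, wpow_one] at hu
  obtain ⟨s₁, s₂, hs, hu₁, hu₂⟩ := exists_eq_append_eq_append_of_append_append_eq hu hpu.le
  have hlu₁ : u.length = p.length + s₁.length := by rw [hu₁, length_append]
  have hls : s.length = s₁.length + s₂.length := by rw [hs, length_append]
  have hc : s₂.length = s₁.length := by
    have := congrArg length hu₂; simp only [length_append] at this; omega
  -- `M = s₂ u = u s₁` has the period `|s₂|` and, as a factor of `vⁿ`, the period `|v|`; by
  -- Fine–Wilf it also has the period `|v| - |s₂|`, which moves the `s₁` in front of `M` onto `s₂`.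
  set M := s₂ ++ u with hM
  have hvM : wpow v n = s₁ ++ M ++ s₂ := by
    rw [← hv, hs, hM, hu₁]; simp only [append_assoc]
  have hMc : M.HasPeriod s₂.length := by
    rw [HasPeriod, take_left, prefix_append_right_inj, hM, hu₂, prefix_append_right_inj, ← hu₂,
      hu₁]
    exact prefix_append _ _
  have hMv : M.HasPeriod v.length := (hvM ▸ hasPeriod_wpow v n).factor
  have hMlen : M.length = p.length + 2 * s₂.length := by
    rw [hM, length_append, hu₂, length_append]; omega
  have hMD : M.HasPeriod (v.length - s₂.length) :=
    (hMc.gcd hMv (by omega)).of_dvd (Nat.dvd_sub (Nat.gcd_dvd_right _ _) (Nat.gcd_dvd_left _ _))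
  obtain ⟨B, hB⟩ : s₂ <+: M.drop (v.length - s₂.length) :=
    prefix_of_prefix_length_le (prefix_append _ _) hMD.drop_prefix (by rw [length_drop]; omega)
  have hW : wpow v n = (s₁ ++ M.take (v.length - s₂.length)) ++ (s₂ ++ B ++ s₂) := by
    conv_lhs => rw [hvM, ← take_append_drop (v.length - s₂.length) M, ← hB]
    simp only [append_assoc]
  have hshift := (hasPeriod_wpow v n).drop_prefix
  rw [hW, drop_left' (by simp only [length_append, length_take]; omega)] at hshift
  obtain ⟨_, h⟩ := hshift
  obtain rfl : s₂ = s₁ := append_inj_left (by simpa only [append_assoc] using h) hc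
  rw [hs, ← append_assoc, ← hu₁, hu₂, append_assoc, ← hu₁, hu₂, append_assoc]

theorem append_comm_of_wpow_eq {p s u v : List α} {m n : ℕ} (hu : p ++ s ++ p = wpow u m)
    (hv : s ++ p ++ s = wpow v n) (hm : 2 ≤ m) (hn : 2 ≤ n) (hpu : p.length < u.length)
    (hsv : s.length < v.length) : p ++ s = s ++ p := by
  rcases le_total s.length p.length with h | h
  · exact append_comm_of_wpow_eq_of_length_le hu hv hm hn hpu hsv h
  · exact (append_comm_of_wpow_eq_of_length_le hv hu hn hm hsv hpu h).symm

end CommonRoot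

section LyndonSchutzenberger

open List

variable {α : Type*}

def HasCommonRoot (u v w : List α) : Prop := ∃ t, u ∈ wpowers t ∧ v ∈ wpowers t ∧ w ∈ wpowers t

theorem HasCommonRoot.of_reverse {u v w : List α}
    (h : HasCommonRoot v.reverse u.reverse w.reverse) : HasCommonRoot u v w := by
  obtain ⟨t, hv, hu, hw⟩ := h
  exact ⟨t.reverse, by simpa using reverse_mem_wpowers hu, by simpa using reverse_mem_wpowers hv,
    by simpa using reverse_mem_wpowers hw⟩

theorem wpow_reverse_append_wpow_reverse {u v z : List α} {m n k : ℕ}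
    (heq : wpow u m ++ wpow v n = wpow z k) :
    wpow v.reverse n ++ wpow u.reverse m = wpow z.reverse k := by
  simpa only [reverse_append, reverse_wpow] using congrArg reverse heq

def OnlyPeriodicSolutions (z : List α) : Prop :=
  ∀ (u v : List α) (m n k : ℕ), 2 ≤ m → 2 ≤ n → 2 ≤ k →
    wpow u m ++ wpow v n = wpow z k → HasCommonRoot u v z

theorem hasCommonRoot_of_length_add_le {u v z : List α} {m n k : ℕ}
    (heq : wpow u m ++ wpow v n = wpow z k) (hm : m ≠ 0) (hn : 2 ≤ n) (hk : k ≠ 0)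
    (hlong : u.length + z.length ≤ (wpow u m).length) : HasCommonRoot u v z := by
  have hz : (wpow u m).HasPeriod z.length :=
    (hasPeriod_wpow z k).infix ⟨[], _, by rw [nil_append, heq]⟩
  obtain ⟨t, hut, hzt⟩ := exists_common_root_of_hasPeriod (hasPeriod_wpow u m) hz hlong
  rw [take_length_wpow hm] at hut
  rw [← take_append_of_le_length (l₂ := wpow v n) (by omega), heq, take_length_wpow hk] at hzt
  obtain ⟨d, hd⟩ : wpow v n ∈ wpowers t :=
    mem_wpowers_of_append_mem (wpow_mem_wpowers_of_mem hut m)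
      (heq ▸ wpow_mem_wpowers_of_mem hzt k)
  obtain ⟨r, hvr, htr⟩ := exists_common_root_of_wpow_eq_wpow hd hn
  exact ⟨r, wpowers_trans hut htr, hvr, wpowers_trans hzt htr⟩

theorem exists_eq_append_and_append_eq_wpow {u z p : List α} {m : ℕ}
    (hu : wpow u m = z ++ p) (hm : m ≠ 0) (hpu : p.length ≤ u.length) :
    ∃ q, u = q ++ p ∧ p ++ z = wpow (p ++ q) m := by
  obtain ⟨m, rfl⟩ := Nat.exists_eq_succ_of_ne_zero hm
  rw [wpow_succ'] at hu
  have hlen := congrArg length hu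
  simp only [length_append, length_wpow] at hlen
  obtain ⟨q, rfl, rfl⟩ := exists_eq_append_of_append_eq_append hu.symm (by
    rw [length_wpow]; omega)
  refine ⟨q, rfl, ?_⟩
  rw [← append_assoc, append_wpow_append, append_assoc, ← wpow_succ']

theorem hasCommonRoot_of_exponent_two {u v z p : List α} {m n : ℕ}
    (ih : ∀ z' : List α, z'.length < z.length → OnlyPeriodicSolutions z')
    (hu : wpow u m = z ++ p) (hv : p ++ wpow v n = z) (hm : 2 ≤ m) (hn : 2 ≤ n)
    (hpu : p.length < u.length) (huz : u.length < z.length) : HasCommonRoot u v z := by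
  obtain ⟨q, rfl, hpz⟩ := exists_eq_append_and_append_eq_wpow hu (by omega) hpu.le
  obtain ⟨t, hp, hv', hpq⟩ := ih (p ++ q) (by simpa [add_comm] using huz) p v 2 n m le_rfl hn hm
    (by rw [← hpz, ← hv, wpow_succ, wpow_one, append_assoc])
  exact ⟨t, append_mem_wpowers (mem_wpowers_of_append_mem hp hpq) hp, hv',
    hv ▸ append_mem_wpowers hp (wpow_mem_wpowers_of_mem hv' n)⟩

theorem hasCommonRoot_of_exponent_three {u v z p : List α} {m n : ℕ}
    (ih : ∀ z' : List α, z'.length < z.length → OnlyPeriodicSolutions z')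
    (hu : wpow u m = z ++ p) (hv : p ++ wpow v n = z ++ z) (hm : 2 ≤ m) (hn : 2 ≤ n)
    (hpu : p.length < u.length) (hvz : (wpow v n).length < v.length + z.length)
    (hp : p ≠ []) (hzv : z.length < (wpow v n).length) : HasCommonRoot u v z := by
  have hlen := congrArg length hv
  simp only [length_append] at hlen
  obtain ⟨s, rfl, hvs⟩ := exists_eq_append_of_append_eq_append hv.symm (by omega)
  have hslen := congrArg length hvs
  simp only [length_append] at hslen hvz
  obtain ⟨t, hpt, hst⟩ := exists_common_root_of_append_comm
    (append_comm_of_wpow_eq hu.symm (by rw [hvs, append_assoc]) hm hn hpu (by omega))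
  obtain ⟨l, hl⟩ := append_mem_wpowers hpt hst
  have hl0 : l ≠ 0 := by rintro rfl; exact hp (append_eq_nil_iff.mp hl).1
  have ht : t.length < (p ++ s).length := by
    have := length_le_of_mem_wpowers hpt hp
    rw [length_append]; omega
  obtain ⟨r, hur, hvr, htr⟩ := ih t ht u v m n (l * 3) hm hn (by omega) (by
    rw [wpow_mul, ← hl, hu, hvs]
    simp only [wpow_succ, wpow_zero, append_assoc, append_nil])
  exact ⟨r, hur, hvr, hl ▸ wpow_mem_wpowers_of_mem htr l⟩

theorem hasCommonRoot_of_lt_length_add {u v z : List α} {m n k : ℕ}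
    (ih : ∀ z' : List α, z'.length < z.length → OnlyPeriodicSolutions z')
    (heq : wpow u m ++ wpow v n = wpow z k) (hm : 2 ≤ m) (hn : 2 ≤ n) (hk : 2 ≤ k)
    (hvu : (wpow v n).length ≤ (wpow u m).length)
    (hu : (wpow u m).length < u.length + z.length)
    (hv : (wpow v n).length < v.length + z.length) : HasCommonRoot u v z := by
  have hlen := congrArg length heq
  simp only [length_append, length_wpow] at hlen hu hv hvu
  have hu2 : 2 * u.length ≤ m * u.length := Nat.mul_le_mul_right _ hm
  have hv2 : 2 * v.length ≤ n * v.length := Nat.mul_le_mul_right _ hn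
  have hz2 : 2 * z.length ≤ k * z.length := Nat.mul_le_mul_right _ hk
  have hk3 : k < 4 := by
    by_contra
    have : 4 * z.length ≤ k * z.length := Nat.mul_le_mul_right _ (by omega)
    omega
  obtain ⟨k, rfl⟩ : ∃ k', k = k' + 1 := ⟨k - 1, by omega⟩
  rw [wpow_succ] at heq
  obtain ⟨p, hup, hpv⟩ := exists_eq_append_of_append_eq_append heq (by rw [length_wpow]; omega)
  have hplen := congrArg length hup
  simp only [length_append, length_wpow] at hplen
  obtain rfl | rfl : k = 1 ∨ k = 2 := by omega
  · exact hasCommonRoot_of_exponent_two ih hup (by simpa using hpv.symm) hm hn (by omega)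
      (by omega)
  · refine hasCommonRoot_of_exponent_three ih hup (by simpa [wpow_succ] using hpv.symm) hm hn
      (by omega) (by simpa using hv) ?_ (by rw [length_wpow]; omega)
    rintro rfl
    simp only [length_nil] at hplen
    omega

theorem hasCommonRoot_of_length_wpow_le {u v z : List α} {m n k : ℕ}
    (ih : ∀ z' : List α, z'.length < z.length → OnlyPeriodicSolutions z')
    (heq : wpow u m ++ wpow v n = wpow z k) (hm : 2 ≤ m) (hn : 2 ≤ n) (hk : 2 ≤ k)
    (hvu : (wpow v n).length ≤ (wpow u m).length) : HasCommonRoot u v z := by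
  by_cases hu : u.length + z.length ≤ (wpow u m).length
  · exact hasCommonRoot_of_length_add_le heq (by omega) hn (by omega) hu
  by_cases hv : v.length + z.length ≤ (wpow v n).length
  · refine HasCommonRoot.of_reverse (hasCommonRoot_of_length_add_le
      (wpow_reverse_append_wpow_reverse heq) (by omega) hm (by omega) ?_)
    simpa using hv
  exact hasCommonRoot_of_lt_length_add ih heq hm hn hk hvu (by omega) (by omega)

theorem onlyPeriodicSolutions (z : List α) : OnlyPeriodicSolutions z := by
  have ih : ∀ z' : List α, z'.length < z.length → OnlyPeriodicSolutions z' :=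
    fun z' _ => onlyPeriodicSolutions z'
  intro u v m n k hm hn hk heq
  rcases le_total (wpow v n).length (wpow u m).length with hvu | huv
  · exact hasCommonRoot_of_length_wpow_le ih heq hm hn hk hvu
  · exact HasCommonRoot.of_reverse (hasCommonRoot_of_length_wpow_le (by simpa using ih)
      (wpow_reverse_append_wpow_reverse heq) hn hm hk (by simpa using huv))
termination_by z.length

end LyndonSchutzenberger

theorem lyndon_schutzenberger_eq_general {α : Type*} (u v w : List α) (m n k : ℕ)
    (hm : 2 ≤ m) (hn : 2 ≤ n) (hk : 2 ≤ k)
    (heq : wpow u m ++ wpow v n = wpow w k) :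
    ∃ t : List α, (∃ i : ℕ, u = wpow t i) ∧ (∃ j : ℕ, v = wpow t j) ∧
      (∃ l : ℕ, w = wpow t l) :=
  onlyPeriodicSolutions w u v m n k hm hn hk heq

/-- Lyndon–Schützenberger: if `uᵐvⁿ = wᵏ ≠ ε` with `m, n, k ≥ 2`, then `u`, `v`, `w`
are powers of a common word. -/
theorem lyndon_schutzenberger_eq {α : Type*} (u v w : List α) (m n k : ℕ)
    (hm : 2 ≤ m) (hn : 2 ≤ n) (hk : 2 ≤ k)
    (heq : wpow u m ++ wpow v n = wpow w k) (hne : wpow w k ≠ []) :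
    ∃ t : List α, (∃ i : ℕ, u = wpow t i) ∧ (∃ j : ℕ, v = wpow t j) ∧
      (∃ l : ℕ, w = wpow t l) :=
  lyndon_schutzenberger_eq_general u v w m n k hm hn hk heq
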